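/- Assume all pairwise distances between distinct pairs of points of S are distinct (so minimum spanning trees are unique). Then every red edge of a minimum red-blue-purple spanning graph is an edge of the Euclidean minimum spanning tree of R ∪ P, and every blue edge is an edge of the Euclidean minimum spanning tree of B ∪ P. -/

import Mathlib

/-!
Let `xy` be a red edge of a minimum RBP graph `E` and put `Q = R ∪ P`. Removing `xy` must
disconnect `x` from `y` inside `Q`: otherwise the lighter graph would still be RBP, as `xy` is
not an edge inside `B ∪ P`. By the cycle property, the Euclidean MST `T` of `Q` joins `x` to `y`
by edges of length at most `|xy|` (a longer edge on the tree path could be exchanged for `xy`).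
One of them, `ab`, crosses from the side of `x` to the side of `y` in `E - xy`, so
`E - xy + ab` is RBP again and `|xy| ≤ |ab|`. Hence `|ab| = |xy|`, and distinct distances force
`ab = xy ∈ T`. Blue edges are red edges after exchanging `R` and `B`.
-/

open scoped Classical

noncomputable section

/-- The Euclidean plane. -/
abbrev Pt : Type := EuclideanSpace ℝ (Fin 2)

/-- The simple graph on the plane whose edge set is the finite set `E`. -/
def graphOf (E : Finset (Sym2 Pt)) : SimpleGraph Pt where
  Adj x y := x ≠ y ∧ s(x, y) ∈ E
  symm := ⟨fun x y ⟨hne, he⟩ => ⟨hne.symm, by rwa [Sym2.eq_swap]⟩⟩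
  loopless := ⟨fun x ⟨hne, _⟩ => hne rfl⟩

/-- Euclidean length of an edge. -/
def edgeLen (e : Sym2 Pt) : ℝ :=
  Sym2.lift ⟨fun x y => dist x y, fun _ _ => dist_comm _ _⟩ e

/-- Total Euclidean length of a finite edge set. -/
def weight (E : Finset (Sym2 Pt)) : ℝ := ∑ e ∈ E, edgeLen e

/-- `E` is the edge set of a red-blue-purple spanning graph of `(R, B, P)`. -/
def IsRBP (R B P : Finset Pt) (E : Finset (Sym2 Pt)) : Prop :=
  (∀ e ∈ E, ¬ e.IsDiag) ∧
  (∀ e ∈ E, ∀ x ∈ e, x ∈ R ∪ B ∪ P) ∧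
  ((graphOf E).induce (↑(R ∪ P) : Set Pt)).Connected ∧
  ((graphOf E).induce (↑(B ∪ P) : Set Pt)).Connected

/-- `E` is the edge set of a minimum red-blue-purple spanning graph of `(R, B, P)`. -/
def IsMinRBP (R B P : Finset Pt) (E : Finset (Sym2 Pt)) : Prop :=
  IsRBP R B P E ∧ ∀ E', IsRBP R B P E' → weight E ≤ weight E'

/-- `T` is the edge set of a spanning tree on the point set `Q`. -/
def IsSpanningTreeOn (Q : Finset Pt) (T : Finset (Sym2 Pt)) : Prop :=
  (∀ e ∈ T, ¬ e.IsDiag) ∧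
  (∀ e ∈ T, ∀ x ∈ e, x ∈ Q) ∧
  ((graphOf T).induce (↑Q : Set Pt)).IsTree

/-- `T` is the edge set of a Euclidean minimum spanning tree of `Q`. -/
def IsEMST (Q : Finset Pt) (T : Finset (Sym2 Pt)) : Prop :=
  IsSpanningTreeOn Q T ∧ ∀ T', IsSpanningTreeOn Q T' → weight T ≤ weight T'

namespace SimpleGraph

variable {V : Type*} {G G' : SimpleGraph V}

theorem Reachable.of_adj_le_reachable (h : G.Adj ≤ G'.Reachable) {u v : V}
    (huv : G.Reachable u v) : G'.Reachable u v := by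
  rw [reachable_eq_reflTransGen] at h huv ⊢
  exact Relation.reflTransGen_closed h _ _ huv

theorem Reachable.deleteEdges_or {z a : V} (b : V) (h : G.Reachable z a) :
    (G.deleteEdges {s(a, b)}).Reachable z a ∨ (G.deleteEdges {s(a, b)}).Reachable z b := by
  rw [reachable_iff_reflTransGen] at h
  induction h using Relation.ReflTransGen.head_induction_on with
  | refl => exact Or.inl .rfl
  | @head z c hzc _ ih =>
    by_cases he : s(z, c) = s(a, b)
    · rcases Sym2.eq_iff.mp he with ⟨rfl, -⟩ | ⟨rfl, -⟩
      exacts [Or.inl .rfl, Or.inr .rfl]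
    · have hzc' : (G.deleteEdges {s(a, b)}).Adj z c := deleteEdges_adj.mpr ⟨hzc, he⟩
      exact ih.imp hzc'.reachable.trans hzc'.reachable.trans

theorem Walk.IsPath.exists_adj_reachable_deleteEdges (S : Set V) {u v : V} {w : G.Walk u v}
    (hw : w.IsPath) (hu : u ∈ S) (hv : v ∉ S) :
    ∃ a b, G.Adj a b ∧ a ∈ S ∧ b ∉ S ∧
      (G.deleteEdges {s(a, b)}).Reachable u a ∧ (G.deleteEdges {s(a, b)}).Reachable b v := by
  induction w with
  | nil => exact absurd hu hv
  | @cons u c v huc q ih =>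
    by_cases hc : c ∈ S
    · obtain ⟨a, b, hab, ha, hb, hca, hbv⟩ := ih hw.of_cons hc hv
      have hne : s(u, c) ≠ s(a, b) := by
        rintro h
        rcases Sym2.eq_iff.mp h with ⟨-, rfl⟩ | ⟨rfl, -⟩
        exacts [hb hc, hb hu]
      have huc' : (G.deleteEdges {s(a, b)}).Adj u c := deleteEdges_adj.mpr ⟨huc, hne⟩
      exact ⟨a, b, hab, ha, hb, huc'.reachable.trans hca, hbv⟩
    · have hq : s(u, c) ∉ q.edges := fun h =>
        ((cons_isPath_iff huc q).mp hw).2 (q.fst_mem_support_of_mem_edges h)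
      exact ⟨u, c, huc, hu, hc, .rfl, ⟨q.toDeleteEdge _ hq⟩⟩

end SimpleGraph

open SimpleGraph Finset

/-- The edges of `F` with both ends in `Q`, as a graph on the whole plane: its reachability
relation stands in for that of `(graphOf F).induce Q` without passing to subtypes. -/
def graphWithin (F : Finset (Sym2 Pt)) (Q : Finset Pt) : SimpleGraph Pt where
  Adj a b := a ∈ Q ∧ b ∈ Q ∧ (graphOf F).Adj a b
  symm := ⟨fun _ _ h => ⟨h.2.1, h.1, h.2.2.symm⟩⟩
  loopless := ⟨fun _ h => h.2.2.ne rfl⟩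

section Connectivity

variable {F F' : Finset (Sym2 Pt)} {Q : Finset Pt} {a b x y : Pt}

theorem graphWithin_adj :
    (graphWithin F Q).Adj a b ↔ a ∈ Q ∧ b ∈ Q ∧ a ≠ b ∧ s(a, b) ∈ F := Iff.rfl

theorem graphWithin_mono (h : F ⊆ F') : graphWithin F Q ≤ graphWithin F' Q :=
  fun _ _ hab => ⟨hab.1, hab.2.1, hab.2.2.1, h hab.2.2.2⟩

theorem graphWithin_erase (e : Sym2 Pt) :
    graphWithin (F.erase e) Q = (graphWithin F Q).deleteEdges {e} := by
  ext a b
  simp only [graphWithin_adj, deleteEdges_adj, mem_erase, Set.mem_singleton_iff]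
  tauto

theorem graphWithin_erase_of_notMem (h : x ∉ Q ∨ y ∉ Q) :
    graphWithin (F.erase s(x, y)) Q = graphWithin F Q := by
  rw [graphWithin_erase, deleteEdges_eq_self, Set.disjoint_singleton_right]
  intro hxy
  rcases h with h | h
  · exact h hxy.1
  · exact h hxy.2.1

theorem graphOf_induce_reachable_iff {p q : (↑Q : Set Pt)} :
    ((graphOf F).induce (↑Q : Set Pt)).Reachable p q ↔ (graphWithin F Q).Reachable p q := by
  let val : (graphOf F).induce (↑Q : Set Pt) →g graphWithin F Q :=
    ⟨Subtype.val, fun {p q} h => ⟨p.2, q.2, h⟩⟩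
  refine ⟨Reachable.map val, fun h => ?_⟩
  obtain ⟨p, hp⟩ := p
  obtain ⟨q, hq⟩ := q
  replace h : Relation.ReflTransGen (graphWithin F Q).Adj p q :=
    (reachable_iff_reflTransGen _ _).mp h
  revert hq
  induction h with
  | refl => exact fun _ => .rfl
  | tail _ hcq ih =>
    exact fun hq => (ih hcq.1).trans (Adj.reachable (G := (graphOf F).induce _) hcq.2.2)

theorem graphOf_induce_connected_iff :
    ((graphOf F).induce (↑Q : Set Pt)).Connected ↔
      Q.Nonempty ∧ ∀ a ∈ Q, ∀ b ∈ Q, (graphWithin F Q).Reachable a b := by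
  rw [connected_iff, and_comm, Set.nonempty_coe_sort, coe_nonempty]
  simp only [Preconnected, Subtype.forall, graphOf_induce_reachable_iff, mem_coe]

theorem connected_induce_of_adj_le_reachable (hF : ((graphOf F).induce (↑Q : Set Pt)).Connected)
    (h : (graphWithin F Q).Adj ≤ (graphWithin F' Q).Reachable) :
    ((graphOf F').induce (↑Q : Set Pt)).Connected := by
  rw [graphOf_induce_connected_iff] at hF ⊢
  exact ⟨hF.1, fun a ha b hb => (hF.2 a ha b hb).of_adj_le_reachable h⟩

theorem adj_le_reachable_of_erase_subset (hF : F.erase s(a, b) ⊆ F')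
    (hab : (graphWithin F' Q).Reachable a b) :
    (graphWithin F Q).Adj ≤ (graphWithin F' Q).Reachable := by
  intro u v huv
  by_cases h : s(u, v) = s(a, b)
  · rcases Sym2.eq_iff.mp h with ⟨rfl, rfl⟩ | ⟨rfl, rfl⟩
    exacts [hab, hab.symm]
  · exact (graphWithin_mono hF ⟨huv.1, huv.2.1, huv.2.2.1, mem_erase.mpr ⟨h, huv.2.2.2⟩⟩).reachable

end Connectivity

section Weight

variable {F F' : Finset (Sym2 Pt)}

theorem edgeLen_mk (x y : Pt) : edgeLen s(x, y) = dist x y := rfl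

theorem edgeLen_nonneg (e : Sym2 Pt) : 0 ≤ edgeLen e := by
  induction e using Sym2.ind with
  | _ x y => rw [edgeLen_mk]; exact dist_nonneg

theorem weight_mono (h : F ⊆ F') : weight F ≤ weight F' :=
  sum_le_sum_of_subset_of_nonneg h fun e _ _ => edgeLen_nonneg e

theorem weight_erase {e : Sym2 Pt} (he : e ∈ F) : weight (F.erase e) = weight F - edgeLen e :=
  sum_erase_eq_sub he

theorem weight_insert_le (e : Sym2 Pt) (F : Finset (Sym2 Pt)) :
    weight (insert e F) ≤ edgeLen e + weight F := by
  by_cases he : e ∈ F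
  · rw [insert_eq_of_mem he]
    linarith [edgeLen_nonneg e]
  · exact (sum_insert he).le

end Weight

section SpanningTree

variable {Q : Finset Pt} {F T : Finset (Sym2 Pt)}

theorem exists_isSpanningTreeOn_subset (h : ((graphOf F).induce (↑Q : Set Pt)).Connected) :
    ∃ T ⊆ F, IsSpanningTreeOn Q T := by
  obtain ⟨H, hle, hH⟩ := h.exists_isTree_le
  have hmem (p q : (↑Q : Set Pt)) :
      s(↑p, ↑q) ∈ Sym2.map Subtype.val '' H.edgeSet ↔ H.Adj p q := by
    rw [← Sym2.map_mk, (Sym2.map.injective Subtype.val_injective).mem_set_image, mem_edgeSet]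
  refine ⟨F.filter (· ∈ Sym2.map Subtype.val '' H.edgeSet), filter_subset _ _, ?_, ?_, ?_⟩
  · intro e he
    obtain ⟨e', he', rfl⟩ := (mem_filter.mp he).2
    rw [Sym2.isDiag_map Subtype.val_injective]
    exact H.not_isDiag_of_mem_edgeSet he'
  · intro e he z hz
    obtain ⟨e', -, rfl⟩ := (mem_filter.mp he).2
    obtain ⟨w, -, rfl⟩ := Sym2.mem_map.mp hz
    exact w.2
  · convert hH
    ext p q
    change (↑p : Pt) ≠ ↑q ∧ s((↑p : Pt), ↑q) ∈ F.filter _ ↔ _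
    rw [mem_filter, hmem]
    exact ⟨fun h => h.2.2, fun h => ⟨(hle h).1, (hle h).2, h⟩⟩

theorem IsEMST.weight_le_of_connected (hT : IsEMST Q T)
    (hF : ((graphOf F).induce (↑Q : Set Pt)).Connected) : weight T ≤ weight F := by
  obtain ⟨T', hT'F, hT'⟩ := exists_isSpanningTreeOn_subset hF
  exact (hT.2 T' hT').trans (weight_mono hT'F)

theorem IsEMST.reachable_filter_edgeLen_le_dist (hT : IsEMST Q T) {x y : Pt} (hx : x ∈ Q)
    (hy : y ∈ Q) : (graphWithin (T.filter fun e => edgeLen e ≤ dist x y) Q).Reachable x y := by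
  by_contra hxy
  have hTconn := hT.1.2.2.connected
  obtain ⟨w, hw⟩ := ((graphOf_induce_connected_iff.mp hTconn).2 x hx y hy).exists_isPath
  obtain ⟨a, b, hab, hxa, hb, hxa', hby⟩ := hw.exists_adj_reachable_deleteEdges
    {z | (graphWithin (T.filter fun e => edgeLen e ≤ dist x y) Q).Reachable x z} .rfl hxy
  rw [← graphWithin_erase] at hxa' hby
  have hlong : dist x y < dist a b := by
    by_contra! hle
    have hshort : (graphWithin (T.filter fun e => edgeLen e ≤ dist x y) Q).Adj a b :=
      ⟨hab.1, hab.2.1, hab.2.2.1, mem_filter.mpr ⟨hab.2.2.2, hle⟩⟩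
    exact hb (hxa.trans hshort.reachable)
  have hne : x ≠ y := fun h => hxy (h ▸ .rfl)
  have hab' : (graphWithin (insert s(x, y) (T.erase s(a, b))) Q).Reachable a b := by
    have hsub := graphWithin_mono (Q := Q) (subset_insert s(x, y) (T.erase s(a, b)))
    exact (hxa'.symm.mono hsub).trans
      ((Adj.reachable (G := graphWithin _ Q) ⟨hx, hy, hne, mem_insert_self _ _⟩).trans
        (hby.symm.mono hsub))
  have hwt := hT.weight_le_of_connected (connected_induce_of_adj_le_reachable hTconn
    (adj_le_reachable_of_erase_subset (subset_insert _ _) hab'))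
  have hins := weight_insert_le s(x, y) (T.erase s(a, b))
  rw [weight_erase hab.2.2.2, edgeLen_mk, edgeLen_mk] at hins
  linarith

end SpanningTree

def DistinctDistances (U : Finset Pt) : Prop :=
  ∀ u v u' v' : Pt, u ∈ U → v ∈ U → u' ∈ U → v' ∈ U → u ≠ v → u' ≠ v' →
    dist u v = dist u' v' → s(u, v) = s(u', v')

theorem DistinctDistances.mono {U W : Finset Pt} (h : DistinctDistances U) (hWU : W ⊆ U) :
    DistinctDistances W :=
  fun u v u' v' hu hv hu' hv' => h u v u' v' (hWU hu) (hWU hv) (hWU hu') (hWU hv')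

section RBP

variable {R B P : Finset Pt} {E F T : Finset (Sym2 Pt)} {x y a b : Pt}

theorem isRBP_comm : IsRBP R B P E ↔ IsRBP B R P E := by
  unfold IsRBP
  rw [union_comm R B]
  tauto

theorem IsMinRBP.comm (hE : IsMinRBP R B P E) : IsMinRBP B R P E :=
  ⟨isRBP_comm.mp hE.1, fun E' hE' => hE.2 E' (isRBP_comm.mpr hE')⟩

theorem IsRBP.ne_of_mk_mem (hE : IsRBP R B P E) (hxy : s(x, y) ∈ E) : x ≠ y :=
  fun h => hE.1 _ hxy (Sym2.mk_isDiag_iff.mpr h)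

theorem IsRBP.of_erase_subset (hE : IsRBP R B P E) (hred : x ∉ B ∪ P ∨ y ∉ B ∪ P)
    (hF : E.erase s(x, y) ⊆ F) (hdiag : ∀ e ∈ F, ¬e.IsDiag)
    (hvert : ∀ e ∈ F, ∀ z ∈ e, z ∈ R ∪ B ∪ P) (hxy : (graphWithin F (R ∪ P)).Reachable x y) :
    IsRBP R B P F := by
  refine ⟨hdiag, hvert, connected_induce_of_adj_le_reachable hE.2.2.1
    (adj_le_reachable_of_erase_subset hF hxy), connected_induce_of_adj_le_reachable hE.2.2.2 ?_⟩
  rw [← graphWithin_erase_of_notMem hred]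
  exact fun u v huv => (graphWithin_mono hF huv).reachable

theorem IsMinRBP.not_reachable_erase (hE : IsMinRBP R B P E) (hxy : s(x, y) ∈ E)
    (hred : x ∉ B ∪ P ∨ y ∉ B ∪ P) :
    ¬(graphWithin (E.erase s(x, y)) (R ∪ P)).Reachable x y := by
  intro h
  have hwt := hE.2 _ (hE.1.of_erase_subset hred subset_rfl
    (fun e he => hE.1.1 e (mem_of_mem_erase he)) (fun e he => hE.1.2.1 e (mem_of_mem_erase he)) h)
  rw [weight_erase hxy, edgeLen_mk] at hwt
  linarith [dist_pos.mpr (hE.1.ne_of_mk_mem hxy)]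

theorem IsMinRBP.dist_le_of_reachable_erase (hE : IsMinRBP R B P E) (hxy : s(x, y) ∈ E)
    (hred : x ∉ B ∪ P ∨ y ∉ B ∪ P) (ha : a ∈ R ∪ P) (hb : b ∈ R ∪ P) (hab : a ≠ b)
    (hxa : (graphWithin (E.erase s(x, y)) (R ∪ P)).Reachable x a)
    (hby : (graphWithin (E.erase s(x, y)) (R ∪ P)).Reachable b y) : dist x y ≤ dist a b := by
  have hsub := graphWithin_mono (Q := R ∪ P) (subset_insert s(a, b) (E.erase s(x, y)))
  have hF : IsRBP R B P (insert s(a, b) (E.erase s(x, y))) := by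
    refine hE.1.of_erase_subset hred (subset_insert _ _) ?_ ?_ ((hxa.mono hsub).trans
      ((Adj.reachable (G := graphWithin _ _) ⟨ha, hb, hab, mem_insert_self _ _⟩).trans
        (hby.mono hsub)))
    · intro e he
      rcases mem_insert.mp he with rfl | he
      · exact Sym2.mk_isDiag_iff.not.mpr hab
      · exact hE.1.1 e (mem_of_mem_erase he)
    · intro e he z hz
      rcases mem_insert.mp he with rfl | he
      · have hRP : R ∪ P ⊆ R ∪ B ∪ P := union_subset_union subset_union_left subset_rfl
        rcases Sym2.mem_iff.mp hz with rfl | rfl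
        exacts [hRP ha, hRP hb]
      · exact hE.1.2.1 e (mem_of_mem_erase he) z hz
  have hwt := hE.2 _ hF
  have hins := weight_insert_le s(a, b) (E.erase s(x, y))
  rw [weight_erase hxy, edgeLen_mk, edgeLen_mk] at hins
  linarith

theorem IsMinRBP.red_edge_mem_emst (hE : IsMinRBP R B P E) (hT : IsEMST (R ∪ P) T)
    (hgen : DistinctDistances (R ∪ P)) (hxy : s(x, y) ∈ E) (hx : x ∈ R ∪ P) (hy : y ∈ R ∪ P)
    (hred : x ∉ B ∪ P ∨ y ∉ B ∪ P) : s(x, y) ∈ T := by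
  obtain ⟨w⟩ := hT.reachable_filter_edgeLen_le_dist hx hy
  obtain ⟨d, -, hxa, hb⟩ := w.exists_boundary_dart
    {z | (graphWithin (E.erase s(x, y)) (R ∪ P)).Reachable x z} .rfl
    (hE.not_reachable_erase hxy hred)
  obtain ⟨ha, hbQ, hab, habT⟩ := d.adj
  have hby : (graphWithin (E.erase s(x, y)) (R ∪ P)).Reachable d.snd y := by
    have hbx := (graphOf_induce_connected_iff.mp hE.1.2.2.1).2 _ hbQ x hx
    rw [graphWithin_erase] at hb ⊢
    exact (hbx.deleteEdges_or y).resolve_left fun h => hb h.symm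
  obtain ⟨habT, hshort⟩ := mem_filter.mp habT
  have heq := hgen _ _ x y ha hbQ hx hy hab (hE.1.ne_of_mk_mem hxy)
    (le_antisymm hshort (hE.dist_le_of_reachable_erase hxy hred ha hbQ hab hxa hby))
  exact heq ▸ habT

end RBP

/-- if all pairwise distances between distinct pairs of points of `S`
are distinct, then every red edge of a minimum RBP spanning graph is an edge of the
Euclidean minimum spanning tree of `R ∪ P`, and every blue edge is an edge of the
Euclidean minimum spanning tree of `B ∪ P`. -/
theorem minRBP_red_blue_edges_in_MST (R B P : Finset Pt)
    (hRB : Disjoint R B) (hRP : Disjoint R P) (hBP : Disjoint B P)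
    (hgen : ∀ u v u' v' : Pt, u ∈ R ∪ B ∪ P → v ∈ R ∪ B ∪ P →
      u' ∈ R ∪ B ∪ P → v' ∈ R ∪ B ∪ P → u ≠ v → u' ≠ v' →
      dist u v = dist u' v' → s(u, v) = s(u', v'))
    (TR TB : Finset (Sym2 Pt))
    (hTR : IsEMST (R ∪ P) TR) (hTB : IsEMST (B ∪ P) TB)
    (E : Finset (Sym2 Pt)) (hE : IsMinRBP R B P E) :
    (∀ x y : Pt, s(x, y) ∈ E → x ∈ R ∪ P → y ∈ R ∪ P → (x ∈ R ∨ y ∈ R) →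
      s(x, y) ∈ TR) ∧
    (∀ x y : Pt, s(x, y) ∈ E → x ∈ B ∪ P → y ∈ B ∪ P → (x ∈ B ∨ y ∈ B) →
      s(x, y) ∈ TB) := by
  have hS : DistinctDistances (R ∪ B ∪ P) := hgen
  have hR : Disjoint R (B ∪ P) := disjoint_union_right.mpr ⟨hRB, hRP⟩
  have hB : Disjoint B (R ∪ P) := disjoint_union_right.mpr ⟨hRB.symm, hBP⟩
  refine ⟨fun x y hxy hx hy hred => ?_, fun x y hxy hx hy hblue => ?_⟩
  · exact hE.red_edge_mem_emst hTR (hS.mono (union_subset_union subset_union_left subset_rfl))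
      hxy hx hy (hred.imp (Finset.disjoint_left.mp hR ·) (Finset.disjoint_left.mp hR ·))
  · exact hE.comm.red_edge_mem_emst hTB
      (hS.mono (union_subset_union subset_union_right subset_rfl))
      hxy hx hy (hblue.imp (Finset.disjoint_left.mp hB ·) (Finset.disjoint_left.mp hB ·))
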